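/- For fixed p ∈ (0,1/2) and g ∈ [0,1), the smallest eigenvalue λ₋(ε) = (1-gε)/2 · (1 - √(u²+v²)) of F^c(diag(1-ε,ε)) satisfies λ₋(ε) = 4p(1-p)(1-g)ε + O(ε²) as ε → 0; in particular its derivative at ε = 0 equals 4p(1-p)(1-g). -/

import Mathlib

/-- The smallest eigenvalue `λ₋(ε)` of `F^c(diag(1-ε, ε))`, with
`u = 2δ√(p(1-p))`, `v = 1-2p`, `δ = (1+ε(g-2))/(1-εg)`. -/
noncomputable def lamMinus (p g : ℝ) (ε : ℝ) : ℝ :=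
  (1 - g * ε) / 2 *
    (1 - Real.sqrt ((2 * ((1 + ε * (g - 2)) / (1 - ε * g)) *
      Real.sqrt (p * (1 - p))) ^ 2 + (1 - 2 * p) ^ 2))

/-!
At `ε = 0` we have `δ = 1`, so `u² + v² = 4p(1-p) + (1-2p)² = 1` and `λ₋(0) = 0`.
Since `λ₋` vanishes there, only the derivative of `1 - √(u² + v²)` contributes, and with
`δ'(0) = 2(g-1)` the chain rule gives `(u² + v²)'(0) = 8p(1-p) δ'(0)`, hence
`λ₋'(0) = ½ · (-½) · 16p(1-p)(g-1) = 4p(1-p)(1-g)`.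
-/

open Real

lemma hasDerivAt_delta_zero (g : ℝ) :
    HasDerivAt (fun ε : ℝ => (1 + ε * (g - 2)) / (1 - ε * g)) (2 * (g - 1)) 0 := by
  have hnum : HasDerivAt (fun ε : ℝ => 1 + ε * (g - 2)) (g - 2) 0 := by
    simpa using ((hasDerivAt_id (0 : ℝ)).mul_const (g - 2)).const_add 1
  have hden : HasDerivAt (fun ε : ℝ => 1 - ε * g) (-g) 0 := by
    simpa using ((hasDerivAt_id (0 : ℝ)).mul_const g).const_sub 1
  refine (hnum.div hden (by simp)).congr_deriv ?_
  ring

lemma sq_two_mul_sqrt_add_sq_eq_one {p : ℝ} (hp : p ∈ Set.Icc (0 : ℝ) 1) :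
    (2 * √(p * (1 - p))) ^ 2 + (1 - 2 * p) ^ 2 = 1 := by
  rw [mul_pow, sq_sqrt (mul_nonneg hp.1 (sub_nonneg.2 hp.2))]
  ring

lemma hasDerivAt_radicand_zero {p : ℝ} (hp : p ∈ Set.Icc (0 : ℝ) 1) (g : ℝ) :
    HasDerivAt
      (fun ε : ℝ => (2 * ((1 + ε * (g - 2)) / (1 - ε * g)) * √(p * (1 - p))) ^ 2
        + (1 - 2 * p) ^ 2)
      (16 * p * (1 - p) * (g - 1)) 0 := by
  have hq : √(p * (1 - p)) ^ 2 = p * (1 - p) :=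
    sq_sqrt (mul_nonneg hp.1 (sub_nonneg.2 hp.2))
  refine ((((hasDerivAt_delta_zero g).const_mul 2).mul_const √(p * (1 - p))).pow 2).add_const
    ((1 - 2 * p) ^ 2) |>.congr_deriv ?_
  norm_num
  linear_combination (16 * (g - 1)) * hq

theorem lamMinus_linear_order_general (p g : ℝ)
    (hp : p ∈ Set.Ioo (0 : ℝ) (1/2)) :
    lamMinus p g 0 = 0 ∧
    HasDerivAt (lamMinus p g) (4 * p * (1 - p) * (1 - g)) 0 := by
  have hp' : p ∈ Set.Icc (0 : ℝ) 1 := ⟨hp.1.le, by linarith [hp.2]⟩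
  have hR := sq_two_mul_sqrt_add_sq_eq_one hp'
  have hsqrt := (hasDerivAt_radicand_zero hp' g).sqrt (by norm_num [hR])
  have hfactor : HasDerivAt (fun ε : ℝ => (1 - g * ε) / 2) (-g / 2) 0 := by
    simpa using (((hasDerivAt_id (0 : ℝ)).const_mul g).const_sub 1).div_const 2
  refine ⟨by simp [lamMinus, hR], ?_⟩
  refine (hfactor.mul (hsqrt.const_sub 1)).congr_deriv ?_
  norm_num [hR]
  ring

theorem lamMinus_linear_order (p g : ℝ)
    (hp : p ∈ Set.Ioo (0 : ℝ) (1/2)) (hg : g ∈ Set.Ico (0 : ℝ) 1) :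
    lamMinus p g 0 = 0 ∧
    HasDerivAt (lamMinus p g) (4 * p * (1 - p) * (1 - g)) 0 :=
  lamMinus_linear_order_general p g hp
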